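/- arXiv:1409.2170 — 7 statements merged into one kernel-verified Lean document; each statement's English description precedes it below -/
import Mathlib

section
/- Let (S, ≤) be a dense semilinear order without maximal or minimal elements in which for all incomparable a, c there is a least common upper bound, and such that for all a < b there exists c with B(a,c,b) strictly between them, and for any two distinct a,b there exists c with B(a,b,c). Then any function f : S → S that preserves B (i.e., B(x,y,z) → B(f x, f y, f z)) is injective. -/
variable {S : Type*} [PartialOrder S]

/-- Incomparability in a partial order. -/
def Incomp (x y : S) : Prop := ¬ x ≤ y ∧ ¬ y ≤ x

/-- Betweenness relation of a semilinear order. -/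
def TreeBtw (a b c : S) : Prop :=
  b ≠ a ∧ b ≠ c ∧
    ((a < b ∧ b ≤ c) ∨ (c < b ∧ b ≤ a) ∨
      (Incomp a c ∧ a < b ∧ c < b ∧ ∀ d, a < d → c < d → b ≤ d))

theorem TreeBtw.ne_left {a b c : S} (h : TreeBtw a b c) : b ≠ a := h.1

theorem injective_of_preserves_btw_general
    (hext : ∀ a b : S, a ≠ b → ∃ c, TreeBtw a b c)
    (f : S → S)
    (hf : ∀ x y z : S, TreeBtw x y z → TreeBtw (f x) (f y) (f z)) :
    Function.Injective f := by
  intro a b hab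
  by_contra hne
  obtain ⟨c, hbtw⟩ := hext a b hne
  exact (hf a b c hbtw).ne_left hab.symm

/-- In a rich dense semilinear order, any function preserving
betweenness is injective. -/
theorem injective_of_preserves_btw
    (hchain : ∀ x y z : S, x ≤ y → x ≤ z → y ≤ z ∨ z ≤ y)
    (hub : ∀ x y : S, ∃ z, x ≤ z ∧ y ≤ z)
    (hdense : ∀ a b : S, a < b → ∃ c, a < c ∧ c < b)
    (hnomax : ∀ a : S, ∃ b, a < b)
    (hnomin : ∀ a : S, ∃ b, b < a)
    (hlub : ∀ a c : S, Incomp a c → ∃ z, a < z ∧ c < z ∧ ∀ d, a < d → c < d → z ≤ d)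
    (hbet : ∀ a b : S, a < b → ∃ c, TreeBtw a c b)
    (hext : ∀ a b : S, a ≠ b → ∃ c, TreeBtw a b c)
    (f : S → S)
    (hf : ∀ x y z : S, TreeBtw x y z → TreeBtw (f x) (f y) (f z)) :
    Function.Injective f :=
  injective_of_preserves_btw_general hext f hf
end

section
/- Let (S, ≤) be a semilinear order with betweenness B, and suppose that for any three distinct points, if some point x satisfies B(a,x,b) and B(b,x,c), then ¬B(a,b,c). Conclude: if a function f : S → S preserves B and for all distinct a,b there exists c with B(a,b,c), then f also preserves ¬B on triples of distinct points, i.e., f is an embedding with respect to B on distinct triples, provided additionally the median property holds (for ¬B(a,b,c) with a,b,c pairwise distinct there is x with B(a,x,b) ∧ B(b,x,c)). -/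
variable {S : Type*} [PartialOrder S]

theorem injective_of_preserves_treeBtw {f : S → S}
    (hf : ∀ x y z : S, TreeBtw x y z → TreeBtw (f x) (f y) (f z))
    (hext : ∀ a b : S, a ≠ b → ∃ c, TreeBtw a b c) :
    Function.Injective f := by
  intro x y hfxy
  by_contra hxy
  obtain ⟨z, hxyz⟩ := hext x y hxy
  exact (hf x y z hxyz).ne_left hfxy.symm

/-- A function preserving betweenness also preserves its negation
on triples of distinct points, given the median property. -/
theorem preserves_not_btw
    (h1 : ∀ a b c : S, a ≠ b → b ≠ c → c ≠ a →
      (∃ x, TreeBtw a x b ∧ TreeBtw b x c) → ¬ TreeBtw a b c)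
    (hmed : ∀ a b c : S, a ≠ b → b ≠ c → c ≠ a →
      ¬ TreeBtw a b c → ∃ x, TreeBtw a x b ∧ TreeBtw b x c)
    (f : S → S)
    (hf : ∀ x y z : S, TreeBtw x y z → TreeBtw (f x) (f y) (f z))
    (hext : ∀ a b : S, a ≠ b → ∃ c, TreeBtw a b c) :
    ∀ a b c : S, a ≠ b → b ≠ c → c ≠ a → ¬ TreeBtw a b c →
      ¬ TreeBtw (f a) (f b) (f c) := by
  intro a b c hab hbc hca hnot
  have hinj := injective_of_preserves_treeBtw hf hext
  obtain ⟨x, hax, hbx⟩ := hmed a b c hab hbc hca hnot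
  exact h1 (f a) (f b) (f c) (hinj.ne hab) (hinj.ne hbc) (hinj.ne hca)
    ⟨f x, hf a x b hax, hf b x c hbx⟩
end

section
/- Let (S, ≤) be a semilinear order and f : S → S a function preserving B and ¬B (on pairwise distinct triples) that is injective. Suppose there exist a,b with a ⊥ b and f(a) < f(b). If there exists c with c > b and B(a,c,b), then f(c) < f(b). Consequently, f maps some comparable pair to a reversed pair: there exist x,y with x < y and f(y) < f(x). -/
variable {S : Type*} [PartialOrder S]

theorem TreeBtw.lt_of_lt {x y z : S} (h : TreeBtw x y z) (hxz : x < z) : y < z := by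
  obtain ⟨-, hyz, hcases⟩ := h
  rcases hcases with ⟨-, hyz'⟩ | ⟨hzy, hyx⟩ | ⟨⟨hxz', -⟩, -⟩
  · exact hyz'.lt_of_ne hyz
  · exact absurd (hzy.trans_le hyx) hxz.not_gt
  · exact absurd hxz.le hxz'

theorem reverses_pair_of_violates_incomp_general
    (hrich : ∀ x y : S, Incomp x y → ∃ c, y < c ∧ TreeBtw x c y)
    (f : S → S)
    (hB : ∀ x y z : S, TreeBtw x y z → TreeBtw (f x) (f y) (f z))
    (a b : S) (hab : Incomp a b) (hfab : f a < f b) :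
    (∀ c, b < c → TreeBtw a c b → f c < f b) ∧ ∃ x y : S, x < y ∧ f y < f x := by
  have below : ∀ c, b < c → TreeBtw a c b → f c < f b :=
    fun c _ hacb => (hB a c b hacb).lt_of_lt hfab
  obtain ⟨c, hbc, hacb⟩ := hrich a b hab
  exact ⟨below, b, c, hbc, below c hbc hacb⟩

/-- If an injective function preserving B and ¬B maps an
incomparable pair to a comparable one, it reverses some comparable pair. -/
theorem reverses_pair_of_violates_incomp
    (hchain : ∀ x y z : S, x ≤ y → x ≤ z → y ≤ z ∨ z ≤ y)
    (hub : ∀ x y : S, ∃ z, x ≤ z ∧ y ≤ z)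
    (hrich : ∀ x y : S, Incomp x y → ∃ c, y < c ∧ TreeBtw x c y)
    (f : S → S) (hinj : Function.Injective f)
    (hB : ∀ x y z : S, TreeBtw x y z → TreeBtw (f x) (f y) (f z))
    (hnB : ∀ x y z : S, x ≠ y → y ≠ z → z ≠ x → ¬ TreeBtw x y z →
      ¬ TreeBtw (f x) (f y) (f z))
    (a b : S) (hab : Incomp a b) (hfab : f a < f b) :
    (∀ c, b < c → TreeBtw a c b → f c < f b) ∧ ∃ x y : S, x < y ∧ f y < f x :=
  reverses_pair_of_violates_incomp_general hrich f hB a b hab hfab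
end

section
/- Let (S, ≤) be a semilinear order and f : S → S injective, preserving B and ¬B. Define T := {x ∈ S | ∃ y, x < y ∧ f(y) < f(x)}. Assume the richness conditions of a dense binary-branching semilinear order (density, no endpoints, any two incomparable elements have a least upper bound, and every pair of elements has strict upper bounds). Then T is upward closed: if x ∈ T and x < y then y ∈ T. -/
variable {S : Type*} [PartialOrder S]

/-!
If `a < b < c`, the images form a betweenness triple, and in each of its three shapes other than
`f c < f b < f a` the point `f a` lies strictly below `f b` or is incomparable with `f c`; so
either `f b < f a` or `f c < f a` already forces `f c < f b < f a`. Given `x < w` with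
`f w < f x` and `x < y`, pick `z` strictly above both `w` and `y`: the chain `x < w < z` gives
`f z < f w < f x`, and then the chain `x < y < z` gives `f z < f y`.
-/

section TreeBtw

variable {a b c : S}

theorem TreeBtw.of_lt_of_lt (hab : a < b) (hbc : b < c) : TreeBtw a b c :=
  ⟨hab.ne', hbc.ne, Or.inl ⟨hab, hbc.le⟩⟩

theorem TreeBtw.right_lt_of_lt_left (h : TreeBtw a b c) (hba : b < a) : c < b := by
  obtain ⟨-, -, ⟨hab, -⟩ | ⟨hcb, -⟩ | ⟨-, hab, -⟩⟩ := h
  · exact absurd hab hba.not_gt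
  · exact hcb
  · exact absurd hab hba.not_gt

theorem TreeBtw.lt_left_of_right_lt (h : TreeBtw a b c) (hca : c < a) : b < a := by
  obtain ⟨hba, -, ⟨hab, hbc⟩ | ⟨-, hba'⟩ | ⟨⟨-, hca'⟩, -⟩⟩ := h
  · exact absurd (hab.trans_le hbc) hca.not_gt
  · exact lt_of_le_of_ne hba' hba
  · exact absurd hca.le hca'

end TreeBtw

theorem reversing_set_upward_closed_general
    (hstrictub : ∀ x y : S, ∃ z, x < z ∧ y < z)
    (f : S → S)
    (hB : ∀ x y z : S, TreeBtw x y z → TreeBtw (f x) (f y) (f z)) :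
    ∀ x y : S, x ∈ {x : S | ∃ y, x < y ∧ f y < f x} → x < y →
      y ∈ {x : S | ∃ y, x < y ∧ f y < f x} := by
  rintro x y ⟨w, hxw, hfw⟩ hxy
  obtain ⟨z, hwz, hyz⟩ := hstrictub w y
  have hBlt : ∀ {a b c : S}, a < b → b < c → TreeBtw (f a) (f b) (f c) :=
    fun hab hbc => hB _ _ _ (.of_lt_of_lt hab hbc)
  have hfzw : f z < f w := (hBlt hxw hwz).right_lt_of_lt_left hfw
  have hfyx : f y < f x := (hBlt hxy hyz).lt_left_of_right_lt (hfzw.trans hfw)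
  exact ⟨z, hyz, (hBlt hxy hyz).right_lt_of_lt_left hfyx⟩

/-- The set T = {x | ∃ y, x < y ∧ f y < f x} is upward closed. -/
theorem reversing_set_upward_closed
    (hchain : ∀ x y z : S, x ≤ y → x ≤ z → y ≤ z ∨ z ≤ y)
    (hub : ∀ x y : S, ∃ z, x ≤ z ∧ y ≤ z)
    (hdense : ∀ a b : S, a < b → ∃ c, a < c ∧ c < b)
    (hnomax : ∀ a : S, ∃ b, a < b)
    (hnomin : ∀ a : S, ∃ b, b < a)
    (hlub : ∀ a c : S, Incomp a c → ∃ z, a < z ∧ c < z ∧ ∀ d, a < d → c < d → z ≤ d)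
    (hstrictub : ∀ x y : S, ∃ z, x < z ∧ y < z)
    (f : S → S) (hinj : Function.Injective f)
    (hB : ∀ x y z : S, TreeBtw x y z → TreeBtw (f x) (f y) (f z))
    (hnB : ∀ x y z : S, x ≠ y → y ≠ z → z ≠ x → ¬ TreeBtw x y z →
      ¬ TreeBtw (f x) (f y) (f z)) :
    ∀ x y : S, x ∈ {x : S | ∃ y, x < y ∧ f y < f x} → x < y →
      y ∈ {x : S | ∃ y, x < y ∧ f y < f x} :=
  reversing_set_upward_closed_general hstrictub f hB
end

section
/- Let (S, ≤) be a semilinear order in which any two elements have a common upper bound, and let f : S → S injective preserve B and ¬B. Let T := {x | ∃ y, x < y ∧ f(y) < f(x)} and assume T is upward closed and f reverses < on T. Then T contains no two incomparable elements, i.e., T is a chain. -/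
/-!
Two incomparable points `x, y` of `T` have a common upper bound `z`, which lies in `T` since `T`
is upward closed, so `f z < f x` and `f z < f y`. Both images lie above `f z`, hence are comparable
by semilinearity and distinct by injectivity, so one of `f x`, `f y` lies strictly between the other
and `f z`. But `y` is not between `x` and `z`, nor `x` between `y` and `z`, and `f` preserves
non-betweenness.
-/

variable {S : Type*} [PartialOrder S]

theorem Incomp.symm {x y : S} (h : Incomp x y) : Incomp y x := ⟨h.2, h.1⟩

theorem Incomp.ne {x y : S} (h : Incomp x y) : x ≠ y := fun hxy => h.1 hxy.le

theorem Incomp.lt_of_le {x y z : S} (h : Incomp x y) (hxz : x ≤ z) (hyz : y ≤ z) : x < z :=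
  hxz.lt_of_ne fun hxz => h.2 (hxz ▸ hyz)

theorem treeBtw_of_lt_of_le {a b c : S} (hne : b ≠ a) (hcb : c < b) (hba : b ≤ a) :
    TreeBtw a b c :=
  ⟨hne, hcb.ne', Or.inr (Or.inl ⟨hcb, hba⟩)⟩

theorem not_treeBtw_of_incomp {x y z : S} (hxy : Incomp x y) (hxz : x < z) (hyz : y < z) :
    ¬ TreeBtw x y z := by
  rintro ⟨-, -, ⟨hxy', -⟩ | ⟨hzy, -⟩ | ⟨⟨hxz', -⟩, -⟩⟩
  · exact hxy.1 hxy'.le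
  · exact (hzy.trans hyz).false
  · exact hxz' hxz.le

theorem Incomp.false_of_map_le {f : S → S} (hinj : Function.Injective f)
    (hnB : ∀ x y z : S, x ≠ y → y ≠ z → z ≠ x → ¬ TreeBtw x y z →
      ¬ TreeBtw (f x) (f y) (f z))
    {x y z : S} (hxy : Incomp x y) (hxz : x < z) (hyz : y < z)
    (hfzx : f z < f x) (hfxy : f x ≤ f y) : False :=
  hnB y x z hxy.symm.ne hxz.ne hyz.ne' (not_treeBtw_of_incomp hxy.symm hyz hxz)
    (treeBtw_of_lt_of_le (hinj.ne hxy.ne) hfzx hfxy)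

theorem reversing_set_is_chain_general
    (hchain : ∀ x y z : S, x ≤ y → x ≤ z → y ≤ z ∨ z ≤ y)
    (hub : ∀ x y : S, ∃ z, x ≤ z ∧ y ≤ z)
    (f : S → S) (hinj : Function.Injective f)
    (hnB : ∀ x y z : S, x ≠ y → y ≠ z → z ≠ x → ¬ TreeBtw x y z →
      ¬ TreeBtw (f x) (f y) (f z))
    (hTup : ∀ x y : S, x ∈ {x : S | ∃ y, x < y ∧ f y < f x} → x < y →
      y ∈ {x : S | ∃ y, x < y ∧ f y < f x})
    (hTrev : ∀ x y : S, x ∈ {x : S | ∃ y, x < y ∧ f y < f x} →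
      y ∈ {x : S | ∃ y, x < y ∧ f y < f x} → x < y → f y < f x) :
    ∀ x y : S, x ∈ {x : S | ∃ y, x < y ∧ f y < f x} →
      y ∈ {x : S | ∃ y, x < y ∧ f y < f x} → ¬ Incomp x y := by
  intro x y hx hy hxy
  obtain ⟨z, hxz, hyz⟩ := hub x y
  have hxz : x < z := hxy.lt_of_le hxz hyz
  have hyz : y < z := hxy.symm.lt_of_le hyz hxz.le
  have hz := hTup x z hx hxz
  have hfzx := hTrev x z hx hz hxz
  have hfzy := hTrev y z hy hz hyz
  rcases hchain (f z) (f x) (f y) hfzx.le hfzy.le with hfxy | hfyx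
  · exact hxy.false_of_map_le hinj hnB hxz hyz hfzx hfxy
  · exact hxy.symm.false_of_map_le hinj hnB hyz hxz hfzy hfyx

/-- The set T = {x | ∃ y, x < y ∧ f y < f x} is a chain. -/
theorem reversing_set_is_chain
    (hchain : ∀ x y z : S, x ≤ y → x ≤ z → y ≤ z ∨ z ≤ y)
    (hub : ∀ x y : S, ∃ z, x ≤ z ∧ y ≤ z)
    (f : S → S) (hinj : Function.Injective f)
    (hB : ∀ x y z : S, TreeBtw x y z → TreeBtw (f x) (f y) (f z))
    (hnB : ∀ x y z : S, x ≠ y → y ≠ z → z ≠ x → ¬ TreeBtw x y z →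
      ¬ TreeBtw (f x) (f y) (f z))
    (hTup : ∀ x y : S, x ∈ {x : S | ∃ y, x < y ∧ f y < f x} → x < y →
      y ∈ {x : S | ∃ y, x < y ∧ f y < f x})
    (hTrev : ∀ x y : S, x ∈ {x : S | ∃ y, x < y ∧ f y < f x} →
      y ∈ {x : S | ∃ y, x < y ∧ f y < f x} → x < y → f y < f x) :
    ∀ x y : S, x ∈ {x : S | ∃ y, x < y ∧ f y < f x} →
      y ∈ {x : S | ∃ y, x < y ∧ f y < f x} → ¬ Incomp x y :=
  reversing_set_is_chain_general hchain hub f hinj hnB hTup hTrev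
end

section
/- Let G be a closed subgroup of the symmetric group on ℚ containing Aut(ℚ,<), so that G is one of the five closed supergroups of Aut(ℚ,<) from Cameron's theorem (Aut(ℚ,<), the group generated by reversals, the group generated by cycles, the group generated by both, and Sym(ℚ)). If, for some 5 pairwise distinct points a₁,…,a₅ of ℚ, some element of G fixes exactly three of a₁,…,a₅ while swapping the other two, then G = Sym(ℚ). -/
/-- Order automorphism of (ℚ, <) as a predicate on permutations. -/
def OrdAuto (σ : Equiv.Perm ℚ) : Prop := ∀ x y : ℚ, x < y → σ x < σ y

/-- Betweenness on ℚ. -/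
def BtwQ (x y z : ℚ) : Prop := (x < y ∧ y < z) ∨ (z < y ∧ y < x)

/-- Cyclic order on ℚ. -/
def CycQ (x y z : ℚ) : Prop :=
  (x < y ∧ y < z) ∨ (y < z ∧ z < x) ∨ (z < x ∧ x < y)

/-- Separation relation on ℚ. -/
def SepQ (a b c d : ℚ) : Prop :=
  (CycQ a c b ∧ CycQ b d a) ∨ (CycQ a d b ∧ CycQ b c a)

def PresB (σ : Equiv.Perm ℚ) : Prop :=
  ∀ x y z : ℚ, BtwQ x y z ↔ BtwQ (σ x) (σ y) (σ z)

def PresC (σ : Equiv.Perm ℚ) : Prop :=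
  ∀ x y z : ℚ, CycQ x y z ↔ CycQ (σ x) (σ y) (σ z)

def PresS (σ : Equiv.Perm ℚ) : Prop :=
  ∀ a b c d : ℚ, SepQ a b c d ↔ SepQ (σ a) (σ b) (σ c) (σ d)

section CameronAux

/-- Case A: two fixed points strictly between x and y. -/
lemma sepCaseA (σ : Equiv.Perm ℚ) (hS : PresS σ) {x y u v : ℚ}
    (hσx : σ x = y) (hσy : σ y = x) (hu : σ u = u) (hv : σ v = v)
    (h1 : x < u) (h2 : u < v) (h3 : v < y) : False := by
  have hsep : SepQ x v u y := by
    simp only [SepQ, CycQ]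
    exact Or.inl ⟨Or.inl ⟨h1, h2⟩, Or.inr (Or.inr ⟨by linarith, by linarith⟩)⟩
  have key := (hS x v u y).mp hsep
  rw [hσx, hσy, hu, hv] at key
  simp only [SepQ, CycQ] at key
  rcases key with ⟨hA, hB⟩ | ⟨hA, hB⟩ <;>
    rcases hA with ⟨p1, p2⟩ | ⟨p1, p2⟩ | ⟨p1, p2⟩ <;>
    rcases hB with ⟨q1, q2⟩ | ⟨q1, q2⟩ | ⟨q1, q2⟩ <;> linarith

/-- Case B: two fixed points above y. -/
lemma sepCaseB (σ : Equiv.Perm ℚ) (hS : PresS σ) {x y u v : ℚ}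
    (hσx : σ x = y) (hσy : σ y = x) (hu : σ u = u) (hv : σ v = v)
    (h1 : x < y) (h2 : y < u) (h3 : u < v) : False := by
  have hsep : SepQ x u y v := by
    simp only [SepQ, CycQ]
    exact Or.inl ⟨Or.inl ⟨h1, h2⟩, Or.inr (Or.inr ⟨by linarith, by linarith⟩)⟩
  have key := (hS x u y v).mp hsep
  rw [hσx, hσy, hu, hv] at key
  simp only [SepQ, CycQ] at key
  rcases key with ⟨hA, hB⟩ | ⟨hA, hB⟩ <;>
    rcases hA with ⟨p1, p2⟩ | ⟨p1, p2⟩ | ⟨p1, p2⟩ <;>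
    rcases hB with ⟨q1, q2⟩ | ⟨q1, q2⟩ | ⟨q1, q2⟩ <;> linarith

/-- Case C: two fixed points below x. -/
lemma sepCaseC (σ : Equiv.Perm ℚ) (hS : PresS σ) {x y u v : ℚ}
    (hσx : σ x = y) (hσy : σ y = x) (hu : σ u = u) (hv : σ v = v)
    (h1 : u < v) (h2 : v < x) (h3 : x < y) : False := by
  have hsep : SepQ x u y v := by
    simp only [SepQ, CycQ]
    exact Or.inl ⟨Or.inr (Or.inr ⟨by linarith, h3⟩), Or.inl ⟨h1, h2⟩⟩
  have key := (hS x u y v).mp hsep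
  rw [hσx, hσy, hu, hv] at key
  simp only [SepQ, CycQ] at key
  rcases key with ⟨hA, hB⟩ | ⟨hA, hB⟩ <;>
    rcases hA with ⟨p1, p2⟩ | ⟨p1, p2⟩ | ⟨p1, p2⟩ <;>
    rcases hB with ⟨q1, q2⟩ | ⟨q1, q2⟩ | ⟨q1, q2⟩ <;> linarith

/-- Case D: one fixed point below x and one above y. -/
lemma sepCaseD (σ : Equiv.Perm ℚ) (hS : PresS σ) {x y u w : ℚ}
    (hσx : σ x = y) (hσy : σ y = x) (hu : σ u = u) (hw : σ w = w)
    (h1 : u < x) (h2 : x < y) (h3 : y < w) : False := by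
  have hsep : SepQ x w y u := by
    simp only [SepQ, CycQ]
    exact Or.inl ⟨Or.inl ⟨h2, h3⟩, Or.inr (Or.inl ⟨h1, by linarith⟩)⟩
  have key := (hS x w y u).mp hsep
  rw [hσx, hσy, hu, hw] at key
  simp only [SepQ, CycQ] at key
  rcases key with ⟨hA, hB⟩ | ⟨hA, hB⟩ <;>
    rcases hA with ⟨p1, p2⟩ | ⟨p1, p2⟩ | ⟨p1, p2⟩ <;>
    rcases hB with ⟨q1, q2⟩ | ⟨q1, q2⟩ | ⟨q1, q2⟩ <;> linarith

lemma sepA' (σ : Equiv.Perm ℚ) (hS : PresS σ) {x y u v : ℚ}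
    (hσx : σ x = y) (hσy : σ y = x) (hu : σ u = u) (hv : σ v = v)
    (h1 : x < u) (h2 : u < y) (h3 : x < v) (h4 : v < y) (huv : u ≠ v) : False := by
  rcases lt_or_gt_of_ne huv with h | h
  · exact sepCaseA σ hS hσx hσy hu hv h1 h h4
  · exact sepCaseA σ hS hσx hσy hv hu h3 h h2

lemma sepB' (σ : Equiv.Perm ℚ) (hS : PresS σ) {x y u v : ℚ}
    (hσx : σ x = y) (hσy : σ y = x) (hu : σ u = u) (hv : σ v = v)
    (h0 : x < y) (h1 : y < u) (h2 : y < v) (huv : u ≠ v) : False := by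
  rcases lt_or_gt_of_ne huv with h | h
  · exact sepCaseB σ hS hσx hσy hu hv h0 h1 h
  · exact sepCaseB σ hS hσx hσy hv hu h0 h2 h

lemma sepC' (σ : Equiv.Perm ℚ) (hS : PresS σ) {x y u v : ℚ}
    (hσx : σ x = y) (hσy : σ y = x) (hu : σ u = u) (hv : σ v = v)
    (h1 : u < x) (h2 : v < x) (h0 : x < y) (huv : u ≠ v) : False := by
  rcases lt_or_gt_of_ne huv with h | h
  · exact sepCaseC σ hS hσx hσy hu hv h h2 h0
  · exact sepCaseC σ hS hσx hσy hv hu h h1 h0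

lemma presS_false (σ : Equiv.Perm ℚ) (hS : PresS σ) {x y p q r : ℚ}
    (hxy : x < y) (hσx : σ x = y) (hσy : σ y = x)
    (hp : σ p = p) (hq : σ q = q) (hr : σ r = r)
    (hpq : p ≠ q) (hpr : p ≠ r) (hqr : q ≠ r) : False := by
  have reg : ∀ z : ℚ, σ z = z → z < x ∨ (x < z ∧ z < y) ∨ y < z := by
    intro z hz
    have hzx : z ≠ x := by
      rintro rfl; rw [hσx] at hz; exact hxy.ne hz.symm
    have hzy : z ≠ y := by
      rintro rfl; rw [hσy] at hz; exact hxy.ne hz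
    rcases lt_trichotomy z x with h | h | h
    · exact Or.inl h
    · exact absurd h hzx
    · rcases lt_trichotomy z y with h' | h' | h'
      · exact Or.inr (Or.inl ⟨h, h'⟩)
      · exact absurd h' hzy
      · exact Or.inr (Or.inr h')
  rcases reg p hp with hP | ⟨hP1, hP2⟩ | hP <;>
    rcases reg q hq with hQ | ⟨hQ1, hQ2⟩ | hQ <;>
    rcases reg r hr with hR | ⟨hR1, hR2⟩ | hR <;>
    first
      | exact sepA' σ hS hσx hσy hp hq hP1 hP2 hQ1 hQ2 hpq
      | exact sepA' σ hS hσx hσy hp hr hP1 hP2 hR1 hR2 hpr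
      | exact sepA' σ hS hσx hσy hq hr hQ1 hQ2 hR1 hR2 hqr
      | exact sepB' σ hS hσx hσy hp hq hxy hP hQ hpq
      | exact sepB' σ hS hσx hσy hp hr hxy hP hR hpr
      | exact sepB' σ hS hσx hσy hq hr hxy hQ hR hqr
      | exact sepC' σ hS hσx hσy hp hq hP hQ hxy hpq
      | exact sepC' σ hS hσx hσy hp hr hP hR hxy hpr
      | exact sepC' σ hS hσx hσy hq hr hQ hR hxy hqr
      | exact sepCaseD σ hS hσx hσy hp hq hP hxy hQ
      | exact sepCaseD σ hS hσx hσy hp hr hP hxy hR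
      | exact sepCaseD σ hS hσx hσy hq hp hQ hxy hP
      | exact sepCaseD σ hS hσx hσy hq hr hQ hxy hR
      | exact sepCaseD σ hS hσx hσy hr hp hR hxy hP
      | exact sepCaseD σ hS hσx hσy hr hq hR hxy hQ

lemma presB_false (σ : Equiv.Perm ℚ) (hB : PresB σ) {x y p q : ℚ}
    (hxy : x < y) (hσx : σ x = y) (hσy : σ y = x)
    (hp : σ p = p) (hq : σ q = q) (hpq : p ≠ q) : False := by
  have mid : ∀ z : ℚ, σ z = z → x < z ∧ z < y := by
    intro z hz
    have hzx : z ≠ x := by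
      rintro rfl; rw [hσx] at hz; exact hxy.ne hz.symm
    have hzy : z ≠ y := by
      rintro rfl; rw [hσy] at hz; exact hxy.ne hz
    rcases lt_trichotomy z x with h | h | h
    · exfalso
      have hb : BtwQ z x y := Or.inl ⟨h, hxy⟩
      have key := (hB z x y).mp hb
      rw [hz, hσx, hσy] at key
      rcases key with ⟨k1, k2⟩ | ⟨k1, k2⟩ <;> linarith
    · exact absurd h hzx
    · rcases lt_trichotomy z y with h' | h' | h'
      · exact ⟨h, h'⟩
      · exact absurd h' hzy
      · exfalso
        have hb : BtwQ x y z := Or.inl ⟨hxy, h'⟩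
        have key := (hB x y z).mp hb
        rw [hz, hσx, hσy] at key
        rcases key with ⟨k1, k2⟩ | ⟨k1, k2⟩ <;> linarith
  obtain ⟨h1, h2⟩ := mid p hp
  obtain ⟨h3, h4⟩ := mid q hq
  rcases lt_or_gt_of_ne hpq with h | h
  · have hb : BtwQ x p q := Or.inl ⟨h1, h⟩
    have key := (hB x p q).mp hb
    rw [hσx, hp, hq] at key
    rcases key with ⟨k1, k2⟩ | ⟨k1, k2⟩ <;> linarith
  · have hb : BtwQ x q p := Or.inl ⟨h3, h⟩
    have key := (hB x q p).mp hb
    rw [hσx, hp, hq] at key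
    rcases key with ⟨k1, k2⟩ | ⟨k1, k2⟩ <;> linarith

lemma presC_false (σ : Equiv.Perm ℚ) (hC : PresC σ) {x y z : ℚ}
    (hxy : x ≠ y) (hσx : σ x = y) (hσy : σ y = x) (hz : σ z = z) : False := by
  have hzx : z ≠ x := by
    rintro rfl; rw [hσx] at hz; exact hxy hz.symm
  have hzy : z ≠ y := by
    rintro rfl; rw [hσy] at hz; exact hxy hz
  have htot : CycQ x y z ∨ CycQ y x z := by
    simp only [CycQ]
    rcases lt_trichotomy x y with h | h | h
    · rcases lt_trichotomy y z with h' | h' | h'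
      · exact Or.inl (Or.inl ⟨h, h'⟩)
      · exact absurd h'.symm hzy
      · rcases lt_trichotomy x z with h'' | h'' | h''
        · exact Or.inr (Or.inr (Or.inl ⟨h'', h'⟩))
        · exact absurd h''.symm hzx
        · exact Or.inl (Or.inr (Or.inr ⟨h'', h⟩))
    · exact absurd h hxy
    · rcases lt_trichotomy x z with h' | h' | h'
      · exact Or.inr (Or.inl ⟨h, h'⟩)
      · exact absurd h'.symm hzx
      · rcases lt_trichotomy y z with h'' | h'' | h''
        · exact Or.inl (Or.inr (Or.inl ⟨h'', h'⟩))
        · exact absurd h''.symm hzy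
        · exact Or.inr (Or.inr (Or.inr ⟨h'', h⟩))
  have hiff := hC x y z
  rw [hσx, hσy, hz] at hiff
  have hnd : ¬ (CycQ x y z ∧ CycQ y x z) := by
    rintro ⟨h1, h2⟩
    simp only [CycQ] at h1 h2
    rcases h1 with ⟨a1, a2⟩ | ⟨a1, a2⟩ | ⟨a1, a2⟩ <;>
      rcases h2 with ⟨b1, b2⟩ | ⟨b1, b2⟩ | ⟨b1, b2⟩ <;> linarith
  rcases htot with h | h
  · exact hnd ⟨h, hiff.mp h⟩
  · exact hnd ⟨hiff.mpr h, h⟩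

lemma fin5_three (i j : Fin 5) (hij : i ≠ j) :
    ∃ k₁ k₂ k₃ : Fin 5, k₁ ≠ k₂ ∧ k₁ ≠ k₃ ∧ k₂ ≠ k₃ ∧
      k₁ ≠ i ∧ k₁ ≠ j ∧ k₂ ≠ i ∧ k₂ ≠ j ∧ k₃ ≠ i ∧ k₃ ≠ j := by
  revert i j; decide

end CameronAux

/-- Among the five closed supergroups of Aut(ℚ,<) from Cameron's
theorem, only Sym(ℚ) contains a permutation transposing two of five given
distinct points while fixing the other three. -/
theorem cameron_transposition_forces_sym
    (G : Subgroup (Equiv.Perm ℚ))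
    (hG : (∀ σ, σ ∈ G ↔ OrdAuto σ) ∨ (∀ σ, σ ∈ G ↔ PresB σ) ∨
          (∀ σ, σ ∈ G ↔ PresC σ) ∨ (∀ σ, σ ∈ G ↔ PresS σ) ∨ G = ⊤)
    (hσ : ∃ σ ∈ G, ∃ a : Fin 5 → ℚ, Function.Injective a ∧
      ∃ i j : Fin 5, i ≠ j ∧ σ (a i) = a j ∧ σ (a j) = a i ∧
        ∀ k, k ≠ i → k ≠ j → σ (a k) = a k) :
    G = ⊤ := by
  obtain ⟨σ, hσG, a, ha, i, j, hij, hab, hba, hfix⟩ := hσ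
  obtain ⟨k₁, k₂, k₃, h12, h13, h23, h1i, h1j, h2i, h2j, h3i, h3j⟩ :=
    fin5_three i j hij
  have hane : a i ≠ a j := fun h => hij (ha h)
  have hp : σ (a k₁) = a k₁ := hfix k₁ h1i h1j
  have hq : σ (a k₂) = a k₂ := hfix k₂ h2i h2j
  have hr : σ (a k₃) = a k₃ := hfix k₃ h3i h3j
  have hpq : a k₁ ≠ a k₂ := fun h => h12 (ha h)
  have hpr : a k₁ ≠ a k₃ := fun h => h13 (ha h)
  have hqr : a k₂ ≠ a k₃ := fun h => h23 (ha h)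
  rcases hG with h | h | h | h | h
  · exfalso
    have hO : OrdAuto σ := (h σ).mp hσG
    rcases lt_or_gt_of_ne hane with hlt | hlt
    · have := hO _ _ hlt; rw [hab, hba] at this; linarith
    · have := hO _ _ hlt; rw [hab, hba] at this; linarith
  · exfalso
    have hB : PresB σ := (h σ).mp hσG
    rcases lt_or_gt_of_ne hane with hlt | hlt
    · exact presB_false σ hB hlt hab hba hp hq hpq
    · exact presB_false σ hB hlt hba hab hp hq hpq
  · exfalso
    have hC : PresC σ := (h σ).mp hσG
    exact presC_false σ hC hane hab hba hp
  · exfalso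
    have hS : PresS σ := (h σ).mp hσG
    rcases lt_or_gt_of_ne hane with hlt | hlt
    · exact presS_false σ hS hlt hab hba hp hq hr hpq hpr hqr
    · exact presS_false σ hS hlt hba hab hp hq hr hpq hpr hqr
  · exact h
end

section
/- Let (S, ≤) be a semilinear order with least upper bounds for pairs having a common upper bound, and define C(c, ab) iff there exists u with a ≤ u, b ≤ u, and ¬(c ≤ u). Let M ⊆ S be an antichain. Then for pairwise distinct a, b, c ∈ M, the relation C restricted to M satisfies the C-relation axioms: (1) C(c,ab) → C(c,ba); (2) C(c,ab) ∧ C(a,bc) is impossible; (3) C(c,ab) → C(c,db) ∨ C(d,ab) for any fourth point d ∈ M. -/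
variable {S : Type*} [PartialOrder S]

/-- `CRel c a b`: a and b branch together away from c. -/
def CRel (c a b : S) : Prop := ∃ u, a ≤ u ∧ b ≤ u ∧ ¬ c ≤ u

/-- On an antichain of a semilinear order, the branching relation
satisfies the C-relation axioms. -/
theorem antichain_CRel_axioms
    (hchain : ∀ x y z : S, x ≤ y → x ≤ z → y ≤ z ∨ z ≤ y)
    (hub : ∀ x y : S, ∃ z, x ≤ z ∧ y ≤ z)
    (hlub : ∀ x y : S, (∃ z, x ≤ z ∧ y ≤ z) →
      ∃ z, x ≤ z ∧ y ≤ z ∧ ∀ w, x ≤ w → y ≤ w → z ≤ w)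
    (M : Set S) (hM : ∀ x ∈ M, ∀ y ∈ M, x ≠ y → Incomp x y) :
    ∀ a ∈ M, ∀ b ∈ M, ∀ c ∈ M, a ≠ b → b ≠ c → c ≠ a →
      (CRel c a b → CRel c b a) ∧
      ¬ (CRel c a b ∧ CRel a b c) ∧
      (∀ d ∈ M, d ≠ a → d ≠ b → d ≠ c →
        (CRel c a b → CRel c d b ∨ CRel d a b)) := by
  intro a _ b _ c _ _ _ _
  refine ⟨?_, ?_, ?_⟩
  · rintro ⟨u, ha, hb, hc⟩; exact ⟨u, hb, ha, hc⟩
  · rintro ⟨⟨u, hau, hbu, hcu⟩, ⟨v, hbv, hcv, hav⟩⟩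
    rcases hchain b u v hbu hbv with h | h
    · exact hav (hau.trans h)
    · exact hcu (hcv.trans h)
  · rintro d _ _ _ _ ⟨u, hau, hbu, hcu⟩
    by_cases hd : d ≤ u
    · obtain ⟨t, hdt, hbt, ht⟩ := hlub d b ⟨u, hd, hbu⟩
      exact Or.inl ⟨t, hdt, hbt, fun hc => hcu (hc.trans (ht u hd hbu))⟩
    · exact Or.inr ⟨u, hau, hbu, hd⟩
end
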